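/- arXiv:2601.02893 — 6 statements merged into one kernel-verified Lean document; each statement's English description precedes it below -/
import Mathlib

section
/- For any integer d ≥ 2 and any real numbers x, y with sin(x + kπ/d) ≠ 0 and sin(y + kπ/d) ≠ 0 for all k ∈ {0,…,d−1} and sin(y−x) ≠ 0, the identity ∑_{k=0}^{d−1} csc(x + kπ/d)·csc(y + kπ/d) = d·(cot(dx) − cot(dy))/sin(y−x) holds. -/
/-!
With `z = exp (2ix)` and `ζ = exp (2πi/d)` we have `exp (2i(x + kπ/d)) = z ζ^k`, and
`cot t = i + 2i / (exp (2it) - 1)`. The cotangent sum `∑ cot (x + kπ/d) = d cot (dx)` thus reduces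
to the partial fraction identity `∑_{k<d} 1 / (z ζ^k - 1) = d / (z^d - 1)` over the `d`-th roots of
unity. The theorem follows by summing `csc a csc b = (cot a - cot b) / sin (b - a)` termwise.
-/

open Finset Real

theorem IsPrimitiveRoot.pow_ne_one_of_forall_mul_pow_ne_one {K : Type*} [Field K] {ζ z : K}
    {d : ℕ} (hζ : IsPrimitiveRoot ζ d) (hd : 0 < d) (hz : ∀ k < d, z * ζ ^ k ≠ 1) :
    z ^ d ≠ 1 := by
  have : NeZero d := ⟨hd.ne'⟩
  intro hzd
  have hz0 : z ≠ 0 := by rintro rfl; simp [hd.ne'] at hzd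
  obtain ⟨k, hk, hζk⟩ := hζ.eq_pow_of_pow_eq_one (ξ := z⁻¹) (by rw [inv_pow, hzd, inv_one])
  exact hz k hk (by rw [hζk, mul_inv_cancel₀ hz0])

theorem IsPrimitiveRoot.sum_one_div_mul_pow_sub_one {K : Type*} [Field K] {ζ z : K} {d : ℕ}
    (hζ : IsPrimitiveRoot ζ d) (hz : z ^ d ≠ 1) :
    ∑ k ∈ range d, 1 / (z * ζ ^ k - 1) = d / (z ^ d - 1) := by
  have hzd : z ^ d - 1 ≠ 0 := sub_ne_zero.2 hz
  -- `(z ζ^k)^d = z^d`, so each term is a geometric sum divided by `z^d - 1`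
  have hterm : ∀ k ∈ range d,
      1 / (z * ζ ^ k - 1) = (∑ j ∈ range d, z ^ j * (ζ ^ j) ^ k) / (z ^ d - 1) := by
    intro k _
    have hpow : (z * ζ ^ k) ^ d = z ^ d := by
      rw [mul_pow, ← pow_mul, mul_comm k, pow_mul, hζ.pow_eq_one, one_pow, mul_one]
    have hne : z * ζ ^ k - 1 ≠ 0 := sub_ne_zero.2 fun h => hz (by rw [← hpow, h, one_pow])
    rw [div_eq_div_iff hne hzd, one_mul, ← hpow, ← geom_sum_mul]
    congr 1
    exact sum_congr rfl fun j _ => by ring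
  have hchar : ∀ j ∈ range d, ∑ k ∈ range d, (ζ ^ j) ^ k = if j = 0 then (d : K) else 0 := by
    intro j hj
    split_ifs with hj0
    · simp [hj0]
    · rw [geom_sum_eq (hζ.pow_ne_one_of_pos_of_lt hj0 (mem_range.1 hj)), ← pow_mul, mul_comm,
        pow_mul, hζ.pow_eq_one, one_pow, sub_self, zero_div]
  rw [sum_congr rfl hterm, ← sum_div, sum_comm]
  simp_rw [← mul_sum]
  have hd : 0 < d := Nat.pos_of_ne_zero fun h => hz (by rw [h, pow_zero])
  rw [sum_congr rfl fun j hj => by rw [hchar j hj]]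
  simp [hd]

theorem Complex.sin_eq_mul_one_sub_exp (t : ℂ) :
    sin t = I / 2 * exp (-t * I) * (1 - exp (2 * I * t)) := by
  have h : exp (-t * I) * exp (2 * I * t) = exp (t * I) := by rw [← exp_add]; ring_nf
  rw [sin, mul_sub, mul_one, mul_assoc, h]
  ring

theorem Complex.sin_ne_zero_iff_exp_ne_one {t : ℂ} : sin t ≠ 0 ↔ exp (2 * I * t) ≠ 1 := by
  simp [sin_eq_mul_one_sub_exp, sub_eq_zero, I_ne_zero, exp_ne_zero, eq_comm (a := (1 : ℂ))]

theorem Complex.cot_eq_I_add_div_exp_sub_one {t : ℂ} (ht : sin t ≠ 0) :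
    cot t = I + 2 * I / (exp (2 * I * t) - 1) := by
  have hw : exp (2 * I * t) - 1 ≠ 0 := sub_ne_zero.2 (sin_ne_zero_iff_exp_ne_one.1 ht)
  have hw' : 1 - exp (2 * I * t) ≠ 0 := by rwa [← neg_sub, neg_ne_zero]
  rw [cot_eq_exp_ratio]
  field_simp
  linear_combination (exp (2 * I * t) - 1) * (1 + exp (2 * I * t)) * I_sq

theorem Complex.sum_cot_add_mul_pi_div (d : ℕ) (x : ℂ)
    (hx : ∀ k ∈ range d, sin (x + k * π / d) ≠ 0) :
    ∑ k ∈ range d, cot (x + k * π / d) = d * cot (d * x) := by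
  rcases Nat.eq_zero_or_pos d with rfl | hd
  · simp
  set z := exp (2 * I * x)
  set ζ := exp (2 * π * I / d)
  have hζ : IsPrimitiveRoot ζ d := isPrimitiveRoot_exp d hd.ne'
  have hexp : ∀ k : ℕ, exp (2 * I * (x + k * π / d)) = z * ζ ^ k := by
    intro k
    rw [← exp_nat_mul, ← exp_add]
    congr 1
    field_simp
  have hexp_d : exp (2 * I * (d * x)) = z ^ d := by
    rw [← exp_nat_mul]
    ring_nf
  have hz : z ^ d ≠ 1 := hζ.pow_ne_one_of_forall_mul_pow_ne_one hd fun k hk => by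
    rw [← hexp k]
    exact sin_ne_zero_iff_exp_ne_one.1 (hx k (mem_range.2 hk))
  have hdx : sin (d * x) ≠ 0 := sin_ne_zero_iff_exp_ne_one.2 (hexp_d ▸ hz)
  calc ∑ k ∈ range d, cot (x + k * π / d)
      = ∑ k ∈ range d, (I + 2 * I * (1 / (z * ζ ^ k - 1))) :=
        sum_congr rfl fun k hk => by
          rw [cot_eq_I_add_div_exp_sub_one (hx k hk), hexp k, mul_one_div]
    _ = d * (I + 2 * I / (z ^ d - 1)) := by
        rw [sum_add_distrib, ← mul_sum, hζ.sum_one_div_mul_pow_sub_one hz]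
        simp only [sum_const, card_range, nsmul_eq_mul]
        ring
    _ = d * cot (d * x) := by rw [cot_eq_I_add_div_exp_sub_one hdx, hexp_d]

theorem Real.sum_cot_add_mul_pi_div (d : ℕ) (x : ℝ)
    (hx : ∀ k ∈ range d, sin (x + k * π / d) ≠ 0) :
    ∑ k ∈ range d, cot (x + k * π / d) = d * cot (d * x) := by
  have hx' : ∀ k ∈ range d, Complex.sin (x + k * π / d) ≠ 0 := fun k hk => by
    exact_mod_cast hx k hk
  exact_mod_cast Complex.sum_cot_add_mul_pi_div d x hx'

theorem Real.one_div_sin_mul_one_div_sin {a b : ℝ} (ha : sin a ≠ 0) (hb : sin b ≠ 0)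
    (hab : sin (b - a) ≠ 0) : 1 / sin a * (1 / sin b) = (cot a - cot b) / sin (b - a) := by
  rw [eq_div_iff hab, cot_eq_cos_div_sin, cot_eq_cos_div_sin, sin_sub]
  field_simp

theorem csc_sum_identity_general (d : ℕ) (x y : ℝ)
    (hx : ∀ k ∈ Finset.range d, Real.sin (x + k * Real.pi / d) ≠ 0)
    (hy : ∀ k ∈ Finset.range d, Real.sin (y + k * Real.pi / d) ≠ 0)
    (hxy : Real.sin (y - x) ≠ 0) :
    ∑ k ∈ Finset.range d,
      (1 / Real.sin (x + k * Real.pi / d)) * (1 / Real.sin (y + k * Real.pi / d)) =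
      d * (Real.cos (d * x) / Real.sin (d * x) - Real.cos (d * y) / Real.sin (d * y)) /
        Real.sin (y - x) := by
  have hterm : ∀ k ∈ range d,
      1 / sin (x + k * π / d) * (1 / sin (y + k * π / d)) =
        (cot (x + k * π / d) - cot (y + k * π / d)) / sin (y - x) :=
    fun k hk => by
      have hsub : y + k * π / d - (x + k * π / d) = y - x := add_sub_add_right_eq_sub _ _ _
      rw [← hsub]
      exact one_div_sin_mul_one_div_sin (hx k hk) (hy k hk) (hsub ▸ hxy)
  rw [sum_congr rfl hterm, ← sum_div, sum_sub_distrib, sum_cot_add_mul_pi_div d x hx,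
    sum_cot_add_mul_pi_div d y hy, cot_eq_cos_div_sin, cot_eq_cos_div_sin, mul_sub]

/-- For integer `d ≥ 2` and reals `x y` with `sin (x + kπ/d) ≠ 0` and `sin (y + kπ/d) ≠ 0`
for all `k < d`, and `sin (y - x) ≠ 0`, we have
`∑_{k<d} csc(x + kπ/d) csc(y + kπ/d) = d (cot(dx) - cot(dy)) / sin(y - x)`. -/
theorem csc_sum_identity (d : ℕ) (hd : 2 ≤ d) (x y : ℝ)
    (hx : ∀ k ∈ Finset.range d, Real.sin (x + k * Real.pi / d) ≠ 0)
    (hy : ∀ k ∈ Finset.range d, Real.sin (y + k * Real.pi / d) ≠ 0)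
    (hxy : Real.sin (y - x) ≠ 0) :
    ∑ k ∈ Finset.range d,
      (1 / Real.sin (x + k * Real.pi / d)) * (1 / Real.sin (y + k * Real.pi / d)) =
      d * (Real.cos (d * x) / Real.sin (d * x) - Real.cos (d * y) / Real.sin (d * y)) /
        Real.sin (y - x) :=
  csc_sum_identity_general d x y hx hy hxy
end

section
/- For any integer d ≥ 2 and any i, ℓ ∈ {0,…,d−1}, we have (1/d²)·∑_{k=0}^{d−1} csc((i−k−1/2)π/d)·csc((ℓ−k−1/2)π/d) = δ_{i,ℓ} (Kronecker delta). -/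
/-!
Put `z = exp (iθ)` with `θ = (a - 1/2)π/d`, so that `z ^ (2d) = -1`. Telescoping then gives
the finite Fourier expansions `csc θ = i ∑_{m<d} z^{-(2m+1)} = -i ∑_{m<d} z^{2m+1}`.
Multiply the expansion of `csc θ_{i-k}` by that of `csc θ_{ℓ-k}` and sum over `k`:
orthogonality of the `d`-th roots of unity keeps only the diagonal terms, and what remains is
`d` times a geometric sum of a `d`-th root of unity, which is `d δ_{iℓ}`. This is algebra in
any field with a primitive `4d`-th root of unity `w`; over `ℂ`, `w = exp (iπ/2d)` and
`z = w ^ (2a - 1)`.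
-/

open Finset

section Field

variable {K : Type*} [Field K]

theorem two_div_sub_inv_eq_sum_inv_pow [NeZero (2 : K)] {z : K} {n : ℕ} (hz : z ^ (2 * n) = -1) :
    2 / (z - z⁻¹) = ∑ m ∈ range n, z⁻¹ ^ (2 * m + 1) := by
  have hz0 : z ≠ 0 := by
    rintro rfl
    rcases n with _ | n
    · exact two_ne_zero (by linear_combination hz : (2 : K) = 0)
    · simp at hz
  have telescope : (z - z⁻¹) * ∑ m ∈ range n, z⁻¹ ^ (2 * m + 1) = 2 := by
    have step (m : ℕ) :
        (z - z⁻¹) * z⁻¹ ^ (2 * m + 1) = (z⁻¹ ^ 2) ^ m - (z⁻¹ ^ 2) ^ (m + 1) := by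
      linear_combination (z⁻¹ ^ 2) ^ m * mul_inv_cancel₀ hz0
    rw [mul_sum, sum_congr rfl fun m _ => step m, sum_range_sub', pow_zero, ← pow_mul, inv_pow,
      hz]
    norm_num
  rw [div_eq_iff (left_ne_zero_of_mul (telescope ▸ two_ne_zero)), ← telescope, mul_comm]

namespace IsPrimitiveRoot

variable {ζ : K} {n : ℕ}

theorem geom_sum_zpow_eq_ite (hζ : IsPrimitiveRoot ζ n) {p : ℤ} (hp : |p| < n) :
    ∑ k ∈ range n, (ζ ^ p) ^ k = if p = 0 then (n : K) else 0 := by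
  split_ifs with hp0
  · simp [hp0]
  have hne : ζ ^ p ≠ 1 := by
    rw [Ne, hζ.zpow_eq_one_iff_dvd]
    exact fun hdvd => hp0 (Int.eq_zero_of_abs_lt_dvd hdvd hp)
  have hpow : (ζ ^ p) ^ n = 1 := by
    rw [← zpow_natCast, ← zpow_mul, mul_comm, zpow_mul, hζ.zpow_eq_one, one_zpow]
  rw [geom_sum_eq hne, hpow, sub_self, zero_div]

theorem sum_sum_sum_mul_zpow_sub (hζ : IsPrimitiveRoot ζ n) (α β : ℕ → K) :
    ∑ k ∈ range n, ∑ m ∈ range n, ∑ m' ∈ range n,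
        α m * β m' * (ζ ^ ((m : ℤ) - m')) ^ k =
      n * ∑ m ∈ range n, α m * β m := by
  have orth {m m'} (hm : m ∈ range n) (hm' : m' ∈ range n) :
      ∑ k ∈ range n, (ζ ^ ((m : ℤ) - m')) ^ k = if m = m' then (n : K) else 0 := by
    rw [mem_range] at hm hm'
    rw [hζ.geom_sum_zpow_eq_ite (by rw [abs_lt]; omega)]
    simp only [sub_eq_zero, Nat.cast_inj]
  rw [sum_comm, mul_sum]
  refine sum_congr rfl fun m hm => ?_
  rw [sum_comm]
  simp_rw [← mul_sum]
  rw [sum_congr rfl fun m' hm' => by rw [orth hm hm']]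
  simp only [mul_ite, mul_zero, sum_ite_eq, if_pos hm]
  ring

end IsPrimitiveRoot

def cscRoot (w : K) (a : ℤ) : K := 2 / (w ^ (2 * a - 1) - (w ^ (2 * a - 1))⁻¹)

variable {w : K} {d : ℕ}

theorem zpow_two_mul_sub_one_pow_eq_neg_one (hw : w ^ (2 * d) = -1) (a : ℤ) :
    (w ^ (2 * a - 1)) ^ (2 * d) = -1 := by
  rw [← zpow_natCast, ← zpow_mul, mul_comm, zpow_mul, zpow_natCast, hw]
  exact Odd.neg_one_zpow ⟨a - 1, by ring⟩

theorem cscRoot_eq_sum [NeZero (2 : K)] (hw : w ^ (2 * d) = -1) (a : ℤ) :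
    cscRoot w a = ∑ m ∈ range d, w ^ (-((2 * a - 1) * (2 * m + 1))) := by
  rw [cscRoot, two_div_sub_inv_eq_sum_inv_pow (zpow_two_mul_sub_one_pow_eq_neg_one hw a)]
  refine sum_congr rfl fun m _ => ?_
  rw [← zpow_neg_one, ← zpow_natCast, ← zpow_mul, ← zpow_mul]
  push_cast
  ring_nf

theorem cscRoot_one_sub (a : ℤ) : cscRoot w (1 - a) = -cscRoot w a := by
  rw [cscRoot, cscRoot, ← div_neg, neg_sub, show 2 * (1 - a) - 1 = -(2 * a - 1) by ring,
    zpow_neg, inv_inv]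

theorem cscRoot_eq_neg_sum [NeZero (2 : K)] (hw : w ^ (2 * d) = -1) (a : ℤ) :
    cscRoot w a = -∑ m ∈ range d, w ^ ((2 * a - 1) * (2 * m + 1)) := by
  rw [← neg_neg (cscRoot w a), ← cscRoot_one_sub, cscRoot_eq_sum hw]
  congr 2 with m
  ring_nf

theorem sum_cscRoot_mul_cscRoot (hw : IsPrimitiveRoot w (4 * d)) {i l : ℤ} (hil : |i - l| < d) :
    ∑ k ∈ range d, cscRoot w (i - k) * cscRoot w (l - k) =
      if i = l then -(d : K) ^ 2 else 0 := by
  have hd : d ≠ 0 := by rintro rfl; exact (abs_nonneg _).not_gt (by exact_mod_cast hil)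
  have hw0 : w ≠ 0 := hw.ne_zero (by omega)
  have hw2 : IsPrimitiveRoot (w ^ (2 * d)) 2 := by
    have h := hw.pow_of_dvd (p := 2 * d) (by omega) ⟨2, by ring⟩
    rwa [show 4 * d = 2 * (2 * d) by ring, Nat.mul_div_cancel _ (by omega)] at h
  have hw4 : IsPrimitiveRoot (w ^ 4) d := by
    simpa using hw.pow_of_dvd (p := 4) (by omega) ⟨d, rfl⟩
  have hneg : w ^ (2 * d) = -1 := hw2.eq_neg_one_of_two_right
  have : NeZero (2 : K) :=
    ⟨fun h2 => hw2.ne_one one_lt_two (by rw [hneg]; linear_combination -h2)⟩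
  calc ∑ k ∈ range d, cscRoot w (i - k) * cscRoot w (l - k)
      = -∑ k ∈ range d, ∑ m ∈ range d, ∑ n ∈ range d,
          w ^ (-((2 * i - 1) * (2 * m + 1))) * w ^ ((2 * l - 1) * (2 * n + 1)) *
            ((w ^ 4) ^ ((m : ℤ) - n)) ^ k := by
        rw [← sum_neg_distrib]
        refine sum_congr rfl fun k _ => ?_
        rw [cscRoot_eq_sum hneg, cscRoot_eq_neg_sum hneg, mul_neg, sum_mul_sum]
        refine congrArg Neg.neg <| sum_congr rfl fun m _ => sum_congr rfl fun n _ => ?_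
        simp only [← zpow_natCast, ← zpow_mul, ← zpow_add₀ hw0]
        congr 1
        push_cast
        ring
    _ = -(d * ∑ m ∈ range d, w ^ (2 * (l - i)) * ((w ^ 4) ^ (l - i)) ^ m) := by
        rw [hw4.sum_sum_sum_mul_zpow_sub]
        congr 2
        refine sum_congr rfl fun m _ => ?_
        simp only [← zpow_natCast, ← zpow_mul, ← zpow_add₀ hw0]
        congr 1
        ring
    _ = if i = l then -(d : K) ^ 2 else 0 := by
        rw [← mul_sum, hw4.geom_sum_zpow_eq_ite (by rwa [abs_sub_comm])]
        obtain rfl | h := eq_or_ne i l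
        · simp only [sub_self, mul_zero, zpow_zero, one_mul, if_true]
          ring
        · simp [h, sub_eq_zero, h.symm]

end Field

namespace Complex

theorem one_div_sin_eq (θ : ℂ) :
    1 / sin θ = I * (2 / (exp (θ * I) - (exp (θ * I))⁻¹)) := by
  rw [sin, ← exp_neg, neg_mul, ← neg_sub]
  simp only [div_eq_mul_inv, mul_inv, inv_neg, inv_I, one_mul, inv_inv]
  ring

theorem ofReal_one_div_sin_eq_I_mul_cscRoot (d : ℕ) (a : ℤ) :
    ((1 / Real.sin ((a - 1 / 2) * Real.pi / d) : ℝ) : ℂ) =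
      I * cscRoot (exp (2 * Real.pi * I / (4 * d : ℕ))) a := by
  have harg : ((2 * a - 1 : ℤ) : ℂ) * (2 * Real.pi * I / (4 * d : ℕ)) =
      (((a - 1 / 2) * Real.pi / d : ℝ) : ℂ) * I := by
    push_cast
    ring
  rw [cscRoot, ← exp_int_mul, harg, ← one_div_sin_eq, ofReal_div, ofReal_one, ofReal_sin]

end Complex

theorem csc_sum_orthonormal_general (d : ℕ) (i l : Fin d) :
    (1 / (d : ℝ) ^ 2) * ∑ k ∈ Finset.range d,
      (1 / Real.sin (((i : ℝ) - (k : ℝ) - 1 / 2) * Real.pi / d)) *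
        (1 / Real.sin (((l : ℝ) - (k : ℝ) - 1 / 2) * Real.pi / d)) =
      if i = l then 1 else 0 := by
  have hd : d ≠ 0 := (Fin.pos i).ne'
  have hil : |((i : ℕ) : ℤ) - (l : ℕ)| < d := by
    rw [abs_lt]; omega
  have key := sum_cscRoot_mul_cscRoot (Complex.isPrimitiveRoot_exp (4 * d) (by omega)) hil
  have hcast (j : Fin d) (k : ℕ) :
      (j : ℝ) - k - 1 / 2 = ((((j : ℕ) : ℤ) - k : ℤ) : ℝ) - 1 / 2 := by
    push_cast
    ring
  have hsum : ∑ k ∈ Finset.range d,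
      (1 / Real.sin (((i : ℝ) - (k : ℝ) - 1 / 2) * Real.pi / d)) *
        (1 / Real.sin (((l : ℝ) - (k : ℝ) - 1 / 2) * Real.pi / d)) =
      if i = l then (d : ℝ) ^ 2 else 0 := by
    apply Complex.ofReal_injective
    simp only [hcast, Complex.ofReal_sum, Complex.ofReal_mul,
      Complex.ofReal_one_div_sin_eq_I_mul_cscRoot]
    have hI (x y : ℂ) : Complex.I * x * (Complex.I * y) = -(x * y) := by
      linear_combination x * y * Complex.I_sq
    simp only [hI, sum_neg_distrib, key, Nat.cast_inj, Fin.val_inj]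
    split_ifs <;> push_cast <;> ring
  rw [hsum]
  split_ifs
  · field_simp
  · simp

/-- For integer `d ≥ 2` and `i, ℓ ∈ {0,…,d−1}`,
`(1/d²) ∑_{k<d} csc((i−k−1/2)π/d) csc((ℓ−k−1/2)π/d) = δ_{i,ℓ}`. -/
theorem csc_sum_orthonormal (d : ℕ) (hd : 2 ≤ d) (i l : Fin d) :
    (1 / (d : ℝ) ^ 2) * ∑ k ∈ Finset.range d,
      (1 / Real.sin (((i : ℝ) - (k : ℝ) - 1 / 2) * Real.pi / d)) *
        (1 / Real.sin (((l : ℝ) - (k : ℝ) - 1 / 2) * Real.pi / d)) =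
      if i = l then 1 else 0 :=
  csc_sum_orthonormal_general d i l
end

section
/- For any integer d ≥ 2, the d×d complex matrix W with entries W_{ij} = 1/(d·sin((i−j−1/2)π/d)) for i, j ∈ {0,…,d−1} is unitary. -/
open Complex Finset

private lemma geom_zero {d : ℕ} {c : ℂ} (hc : c ^ d = 1) (h1 : c ≠ 1) :
    ∑ j ∈ range d, c ^ j = 0 := by
  rw [geom_sum_eq h1, hc, sub_self, zero_div]

private lemma inv_sin_form (d x : ℂ) (hd : d ≠ 0) (hx : x ≠ 0) (hx2 : x*x ≠ 1) :
    1/(d * ((x⁻¹ - x) * I / 2)) = 2*x*I/(d*(x*x-1)) := by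
  have hxx : x⁻¹ - x ≠ 0 := by
    intro h; apply hx2
    have h' : x⁻¹ = x := sub_eq_zero.mp h
    calc x*x = x*x⁻¹ := by rw [h']
    _ = 1 := mul_inv_cancel₀ hx
  have hD1 : d * ((x⁻¹ - x) * I / 2) ≠ 0 :=
    mul_ne_zero hd (div_ne_zero (mul_ne_zero hxx I_ne_zero) two_ne_zero)
  have hE : d*(x*x-1) ≠ 0 := mul_ne_zero hd (sub_ne_zero.mpr hx2)
  rw [div_eq_div_iff hD1 hE]
  have hinv : x * x⁻¹ = 1 := mul_inv_cancel₀ hx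
  linear_combination (-d*I^2) * hinv + (d*x*x - d) * Complex.I_sq

private lemma diag_term (d x : ℂ) :
    2*x*I/(d*(x*x-1)) * (2*x*I/(d*(x*x-1))) = (-4) * (x*x) / (d^2*(x*x-1)*(x*x-1)) := by
  rw [div_mul_div_comm, show 2*x*I*(2*x*I) = (-4)*(x*x) by linear_combination (4*x*x)*Complex.I_sq]
  congr 1
  ring

private lemma pf_lemma (e P Q V : ℂ) (he : e ≠ 0) (hPQ : P - Q ≠ 0)
    (hVP : V - P ≠ 0) (hVQ : V - Q ≠ 0) :
    (-4/(e*(P - Q))) * (P * (1/(V - P))) - (-4/(e*(P - Q))) * (Q * (1/(V - Q)))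
      = -4*V/(e*((V - P)*(V - Q))) := by
  field_simp
  ring

private lemma offdiag_term (d x y : ℂ) (hd : d ≠ 0) (hx : x ≠ 0) (hy : y ≠ 0)
    (hx2 : x*x ≠ 1) (hy2 : y*y ≠ 1) (hPQ : x*y⁻¹ - x⁻¹*y ≠ 0) :
    2*x*I/(d*(x*x-1)) * (2*y*I/(d*(y*y-1)))
      = (-4/(d^2*(x*y⁻¹ - x⁻¹*y))) * ((x*y⁻¹) * (1/(x*y - x*y⁻¹)))
        - (-4/(d^2*(x*y⁻¹ - x⁻¹*y))) * ((x⁻¹*y) * (1/(x*y - x⁻¹*y))) := by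
  have hVP : x*y - x*y⁻¹ ≠ 0 := by
    rw [show x*y - x*y⁻¹ = x*y⁻¹*(y*y-1) by field_simp]
    exact mul_ne_zero (mul_ne_zero hx (inv_ne_zero hy)) (sub_ne_zero.mpr hy2)
  have hVQ : x*y - x⁻¹*y ≠ 0 := by
    rw [show x*y - x⁻¹*y = x⁻¹*y*(x*x-1) by field_simp]
    exact mul_ne_zero (mul_ne_zero (inv_ne_zero hx) hy) (sub_ne_zero.mpr hx2)
  rw [pf_lemma (d^2) (x*y⁻¹) (x⁻¹*y) (x*y) (pow_ne_zero 2 hd) hPQ hVP hVQ]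
  rw [div_mul_div_comm, show 2*x*I*(2*y*I) = -4*(x*y) by linear_combination (4*x*y)*Complex.I_sq]
  congr 1
  field_simp

private lemma half_sum (d : ℕ) (hd : 2 ≤ d) (ε p : ℂ) (V : ℕ → ℂ) (hε : ε ≠ 0)
    (hVd : ∀ j, (V j) ^ d = ε) (hpd : p ^ d = -ε)
    (hVpow : ∀ k : ℕ, 0 < k → k < d → ∑ j ∈ range d, (V j) ^ k = 0) :
    p * ∑ j ∈ range d, 1 / (V j - p) = -(d : ℂ) / 2 := by
  rw [Finset.mul_sum]
  have h2ε : (2:ℂ) * ε ≠ 0 := mul_ne_zero two_ne_zero hε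
  have hVp : ∀ j, V j - p ≠ 0 := by
    intro j h
    have : V j = p := sub_eq_zero.mp h
    apply h2ε
    have h3 : ε = -ε := by conv_lhs => rw [← hVd j, this, hpd]
    linear_combination h3
  have hG : ∀ j, 1 / (V j - p) = (∑ k ∈ range d, (V j) ^ k * p ^ (d - 1 - k)) / (2 * ε) := by
    intro j
    rw [div_eq_div_iff (hVp j) h2ε, one_mul]
    rw [show (2:ℂ) * ε = ε - -ε by ring, ← hpd, ← hVd j]
    exact (geom_sum₂_mul (V j) p d).symm
  calc ∑ j ∈ range d, p * (1 / (V j - p))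
      = ∑ j ∈ range d, p * ((∑ k ∈ range d, (V j) ^ k * p ^ (d - 1 - k)) / (2 * ε)) := by
        exact Finset.sum_congr rfl (fun j _ => by rw [hG j])
    _ = (p / (2 * ε)) * ∑ j ∈ range d, ∑ k ∈ range d, (V j) ^ k * p ^ (d - 1 - k) := by
        rw [Finset.mul_sum]; exact Finset.sum_congr rfl (fun j _ => by ring)
    _ = (p / (2 * ε)) * ∑ k ∈ range d, (∑ j ∈ range d, (V j) ^ k) * p ^ (d - 1 - k) := by
        rw [Finset.sum_comm]
        congr 1
        exact Finset.sum_congr rfl (fun k _ => by rw [Finset.sum_mul])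
    _ = (p / (2 * ε)) * ((d : ℂ) * p ^ (d - 1)) := by
        congr 1
        rw [Finset.sum_eq_single 0]
        · simp
        · intro k hk hk0
          rw [hVpow k (Nat.pos_of_ne_zero hk0) (mem_range.mp hk), zero_mul]
        · intro h; simp at h; omega
    _ = -(d : ℂ) / 2 := by
        have hpd1 : p * p ^ (d - 1) = p ^ d := by
          rw [← pow_succ']
          congr 1
          omega
        rw [show (p/(2*ε)) * ((d:ℂ) * p^(d-1)) = ((d:ℂ) * (p * p^(d-1)))/(2*ε) by ring,
          hpd1, hpd, div_eq_div_iff h2ε two_ne_zero]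
        ring

private lemma diag_sum (d : ℕ) (hd : 2 ≤ d) (V : ℕ → ℂ) (hVd : ∀ j, (V j) ^ d = -1)
    (hVpow : ∀ K : ℕ, 0 < K → K < 2*d → K ≠ d → ∑ j ∈ range d, (V j) ^ K = 0) :
    ∑ j ∈ range d, (-4) * V j / ((d:ℂ)^2 * (V j - 1) * (V j - 1)) = 1 := by
  have hdC : (d:ℂ) ≠ 0 := Nat.cast_ne_zero.mpr (by omega)
  have hV1 : ∀ j, V j - 1 ≠ 0 := by
    intro j h
    have h2 := hVd j
    rw [sub_eq_zero.mp h, one_pow] at h2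
    norm_num at h2
  have hG : ∀ j, (∑ k ∈ range d, (V j) ^ k) * (V j - 1) = -2 := by
    intro j; rw [geom_sum_mul, hVd j]; ring
  have hstep : ∀ j, (-4) * V j / ((d:ℂ)^2 * (V j - 1) * (V j - 1))
      = -(V j * (∑ k ∈ range d, (V j) ^ k)^2) / (d:ℂ)^2 := by
    intro j
    have hA : (d:ℂ)^2 * (V j - 1) * (V j - 1) ≠ 0 :=
      mul_ne_zero (mul_ne_zero (pow_ne_zero 2 hdC) (hV1 j)) (hV1 j)
    rw [div_eq_div_iff hA (pow_ne_zero 2 hdC)]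
    linear_combination (V j * (d:ℂ)^2 * ((∑ k ∈ range d, (V j) ^ k) * (V j - 1) - 2)) * hG j
  have hexp : ∀ j, V j * (∑ k ∈ range d, (V j) ^ k)^2
      = ∑ k ∈ range d, ∑ l ∈ range d, (V j) ^ (1+k+l) := by
    intro j
    rw [sq, Finset.sum_mul_sum, Finset.mul_sum]
    refine Finset.sum_congr rfl (fun k _ => ?_)
    rw [Finset.mul_sum]
    refine Finset.sum_congr rfl (fun l _ => ?_)
    rw [pow_add, pow_add, pow_one]; ring
  have hbig : ∑ j ∈ range d, V j * (∑ k ∈ range d, (V j) ^ k)^2 = -(d:ℂ) * d := by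
    calc ∑ j ∈ range d, V j * (∑ k ∈ range d, (V j) ^ k)^2
        = ∑ j ∈ range d, ∑ k ∈ range d, ∑ l ∈ range d, (V j) ^ (1+k+l) := by
          exact Finset.sum_congr rfl (fun j _ => hexp j)
      _ = ∑ k ∈ range d, ∑ l ∈ range d, ∑ j ∈ range d, (V j) ^ (1+k+l) := by
          rw [Finset.sum_comm]
          exact Finset.sum_congr rfl (fun k _ => Finset.sum_comm)
      _ = ∑ k ∈ range d, ∑ l ∈ range d, (if l = d-1-k then -(d:ℂ) else 0) := by
          refine Finset.sum_congr rfl (fun k hk => Finset.sum_congr rfl (fun l hl => ?_))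
          have hk' := mem_range.mp hk
          have hl' := mem_range.mp hl
          by_cases h : l = d-1-k
          · rw [if_pos h]
            have hkl : 1+k+l = d := by omega
            rw [hkl]
            rw [Finset.sum_congr rfl (fun j _ => hVd j)]
            simp
          · rw [if_neg h]
            exact hVpow _ (by omega) (by omega) (by omega)
      _ = ∑ k ∈ range d, -(d:ℂ) := by
          refine Finset.sum_congr rfl (fun k hk => ?_)
          rw [Finset.sum_ite_eq' (range d) (d-1-k) (fun _ => -(d:ℂ))]
          rw [if_pos (mem_range.mpr (by have := mem_range.mp hk; omega))]
      _ = -(d:ℂ) * d := by rw [Finset.sum_const, card_range]; simp [mul_comm]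
  rw [Finset.sum_congr rfl (fun j _ => hstep j)]
  rw [← Finset.sum_div, Finset.sum_neg_distrib, hbig]
  field_simp

private lemma key (d : ℕ) (hd : 2 ≤ d) (i i' : ℕ) (hi : i < d) (hi' : i' < d) :
    ∑ j ∈ range d,
      (((1 / (d * Real.sin (((i : ℝ) - (j : ℝ) - 1 / 2) * Real.pi / d)) : ℝ) : ℂ) *
       ((1 / (d * Real.sin (((i' : ℝ) - (j : ℝ) - 1 / 2) * Real.pi / d)) : ℝ) : ℂ)) =
      if i = i' then 1 else 0 := by
  have hdC : (d:ℂ) ≠ 0 := Nat.cast_ne_zero.mpr (by omega)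
  have hdR : (d:ℝ) ≠ 0 := Nat.cast_ne_zero.mpr (by omega)
  have hπ : (Real.pi:ℂ) ≠ 0 := Complex.ofReal_ne_zero.mpr Real.pi_ne_zero
  set s : ℂ := Complex.exp (↑Real.pi * I / (2*(d:ℂ))) with hs
  have hs0 : s ≠ 0 := Complex.exp_ne_zero _
  have hpow : ∀ n : ℤ, s ^ n = Complex.exp ((n:ℂ) * (↑Real.pi * I / (2*(d:ℂ)))) :=
    fun n => (Complex.exp_int_mul _ n).symm
  have hs1 : ∀ n : ℤ, s ^ n = 1 ↔ (4*(d:ℤ)) ∣ n := by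
    intro n
    rw [hpow, Complex.exp_eq_one_iff]
    constructor
    · rintro ⟨k, hk⟩
      refine ⟨k, ?_⟩
      have h2 : (n:ℂ) = 4*d*k := by
        field_simp at hk
        have hPI : (Real.pi:ℂ) * I ≠ 0 := mul_ne_zero hπ I_ne_zero
        apply mul_right_cancel₀ hPI
        rw [hk]; ring
      exact_mod_cast h2
    · rintro ⟨k, hk⟩
      exact ⟨k, by rw [hk]; push_cast; field_simp; ring⟩
  have hs4d : s ^ (4*(d:ℤ)) = 1 := (hs1 _).2 ⟨1, by ring⟩
  have hs2d : s ^ (2*(d:ℤ)) = -1 := by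
    rw [hpow, show ((2*(d:ℤ) : ℤ):ℂ) * (↑Real.pi * I / (2*(d:ℂ))) = ↑Real.pi * I by
      push_cast; field_simp]
    exact Complex.exp_pi_mul_I
  have hodd : ∀ n : ℤ, Odd n → s ^ (2*n) ≠ 1 := by
    intro n hn h
    rcases (hs1 _).1 h with ⟨k, hk⟩
    exact (Int.not_odd_iff_even.mpr ⟨(d:ℤ)*k, by linarith⟩) hn
  have hsin : ∀ n : ℤ, ((Real.sin ((n:ℝ) * Real.pi / (2*(d:ℝ))) : ℝ) : ℂ)
      = (s ^ (-n) - s ^ n) * I / 2 := by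
    intro n
    rw [Complex.ofReal_sin, Complex.sin, hpow, hpow]
    rw [show -(((n:ℝ) * Real.pi / (2*(d:ℝ)) : ℝ) : ℂ) * I
        = ((-n : ℤ):ℂ) * (↑Real.pi * I / (2*(d:ℂ))) by push_cast; ring]
    rw [show (((n:ℝ) * Real.pi / (2*(d:ℝ)) : ℝ) : ℂ)  * I
        = ((n : ℤ):ℂ) * (↑Real.pi * I / (2*(d:ℂ))) by push_cast; ring]
  have hentry : ∀ a j : ℕ, ((1 / (d * Real.sin (((a : ℝ) - (j : ℝ) - 1/2) * Real.pi / d)) : ℝ) : ℂ)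
      = 1 / (d * ((s ^ (-(2*(a:ℤ)-2*j-1)) - s ^ (2*(a:ℤ)-2*j-1)) * I / 2)) := by
    intro a j
    have hang : ((a : ℝ) - (j : ℝ) - 1/2) * Real.pi / d
        = ((2*(a:ℤ)-2*j-1 : ℤ) : ℝ) * Real.pi / (2*(d:ℝ)) := by
      have h2d : (2*(d:ℝ)) ≠ 0 := by positivity
      push_cast
      rw [div_eq_div_iff hdR h2d]
      ring
    rw [hang, Complex.ofReal_div, Complex.ofReal_mul, Complex.ofReal_one,
      Complex.ofReal_natCast, hsin]
  -- general power-sum helper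
  have hzero : ∀ (C : ℤ) (K : ℕ), ¬((d:ℤ) ∣ (K:ℤ)) →
      ∑ j ∈ range d, (s^(C - 4*(j:ℤ)))^K = 0 := by
    intro C K hK
    have hterm : ∀ j ∈ range d, (s^(C - 4*(j:ℤ)))^K = s^(C*K) * (s^(-4*(K:ℤ)))^j := by
      intro j _
      rw [← zpow_natCast (s^(C - 4*(j:ℤ))) K, ← zpow_mul,
          ← zpow_natCast (s^(-4*(K:ℤ))) j, ← zpow_mul, ← zpow_add₀ hs0]
      congr 1
      push_cast
      ring
    rw [Finset.sum_congr rfl hterm, ← Finset.mul_sum]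
    have h1 : (s^(-4*(K:ℤ)))^d = 1 := by
      rw [← zpow_natCast (s^(-4*(K:ℤ))) d, ← zpow_mul]
      exact (hs1 _).2 ⟨-(K:ℤ), by push_cast; ring⟩
    have h2 : s^(-4*(K:ℤ)) ≠ 1 := by
      intro h
      rcases (hs1 _).1 h with ⟨k, hk⟩
      have hm : (d:ℤ)*k = -(K:ℤ) := by linarith
      exact hK ⟨-k, by linear_combination hm⟩
    rw [geom_zero h1 h2, mul_zero]
  have hconstd : ∀ (C : ℤ) (j : ℕ), (s^(C - 4*(j:ℤ)))^d = s^(C*(d:ℤ)) := by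
    intro C j
    rw [← zpow_natCast (s^(C - 4*(j:ℤ))) d, ← zpow_mul,
        show (C - 4*(j:ℤ))*(d:ℤ) = C*(d:ℤ) + (4*(d:ℤ))*(-(j:ℤ)) by ring,
        zpow_add₀ hs0, zpow_mul s (4*(d:ℤ)) (-(j:ℤ)), hs4d, one_zpow, mul_one]
  have hdvd2 : ∀ z : ℤ, z ≠ 0 → z ≠ (d:ℤ) → -(d:ℤ) < z → z < 2*(d:ℤ) → ¬((d:ℤ) ∣ z) := by
    rintro z hz hzd hz1 hz2 ⟨k, hk⟩
    rcases lt_trichotomy k 0 with h | h | h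
    · have h5 : (d:ℤ)*k ≤ (d:ℤ)*(-1) := by
        apply mul_le_mul_of_nonneg_left (by omega) (by omega)
      rw [← hk] at h5
      omega
    · rw [h, mul_zero] at hk; omega
    · rcases lt_trichotomy k 1 with h' | h' | h'
      · omega
      · rw [h', mul_one] at hk; omega
      · have h5 : (d:ℤ)*2 ≤ (d:ℤ)*k := by
          apply mul_le_mul_of_nonneg_left (by omega) (by omega)
        rw [← hk] at h5
        omega
  -- entry in exponential form
  have hxne : ∀ a j : ℕ, s^(2*(a:ℤ)-2*j-1) ≠ 0 := fun a j => zpow_ne_zero _ hs0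
  have hxxne : ∀ a j : ℕ, s^(2*(a:ℤ)-2*j-1) * s^(2*(a:ℤ)-2*j-1) ≠ 1 := by
    intro a j
    rw [← zpow_add₀ hs0,
      show (2*(a:ℤ)-2*j-1) + (2*(a:ℤ)-2*j-1) = 2*(2*(a:ℤ)-2*j-1) by ring]
    exact hodd _ ⟨(a:ℤ)-j-1, by ring⟩
  have hE : ∀ a j : ℕ, ((1 / (d * Real.sin (((a : ℝ) - (j : ℝ) - 1/2) * Real.pi / d)) : ℝ) : ℂ)
      = 2*(s^(2*(a:ℤ)-2*(j:ℤ)-1))*I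
        /((d:ℂ)*((s^(2*(a:ℤ)-2*(j:ℤ)-1))*(s^(2*(a:ℤ)-2*(j:ℤ)-1))-1)) := by
    intro a j
    rw [hentry a j, zpow_neg]
    exact inv_sin_form _ _ hdC (hxne a j) (hxxne a j)
  rw [Finset.sum_congr rfl (fun j _ => by rw [hE i j, hE i' j])]
  by_cases hii : i = i'
  · subst hii
    rw [if_pos rfl]
    have hVx : ∀ j : ℕ, s^(2*(i:ℤ)-2*j-1) * s^(2*(i:ℤ)-2*j-1) = s^((4*(i:ℤ)-2) - 4*(j:ℤ)) := by
      intro j; rw [← zpow_add₀ hs0]; congr 1; ring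
    have hstep : ∀ j ∈ range d,
        2*(s^(2*(i:ℤ)-2*(j:ℤ)-1))*I
          /((d:ℂ)*((s^(2*(i:ℤ)-2*(j:ℤ)-1))*(s^(2*(i:ℤ)-2*(j:ℤ)-1))-1))
        * (2*(s^(2*(i:ℤ)-2*(j:ℤ)-1))*I
          /((d:ℂ)*((s^(2*(i:ℤ)-2*(j:ℤ)-1))*(s^(2*(i:ℤ)-2*(j:ℤ)-1))-1)))
        = (-4) * (s^((4*(i:ℤ)-2) - 4*(j:ℤ)))
          / ((d:ℂ)^2 * (s^((4*(i:ℤ)-2) - 4*(j:ℤ)) - 1) * (s^((4*(i:ℤ)-2) - 4*(j:ℤ)) - 1)) := by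
      intro j _
      rw [diag_term, hVx j]
    rw [Finset.sum_congr rfl hstep]
    apply diag_sum d hd (fun j => s^((4*(i:ℤ)-2) - 4*(j:ℤ)))
    · intro j
      rw [hconstd,
        show (4*(i:ℤ)-2)*(d:ℤ) = (4*(d:ℤ))*(i:ℤ) + (2*(d:ℤ))*(-1) by ring,
        zpow_add₀ hs0, zpow_mul s (4*(d:ℤ)) (i:ℤ), zpow_mul s (2*(d:ℤ)) (-1 : ℤ),
        hs4d, one_zpow, hs2d, one_mul]
      norm_num
    · intro K h1 h2 h3
      refine hzero _ K (hdvd2 (K:ℤ) (by omega) (by omega) (by omega) (by omega))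
  · rw [if_neg hii]
    have hii' : (i:ℤ) ≠ (i':ℤ) := fun h => hii (by exact_mod_cast h)
    have hP4 : s^(4*((i:ℤ)-i')) ≠ 1 := by
      intro h
      rcases (hs1 _).1 h with ⟨k, hk⟩
      have hm : (i:ℤ) - i' = (d:ℤ)*k := by linarith
      exact hdvd2 ((i:ℤ)-i') (by omega) (by omega) (by omega) (by omega) ⟨k, hm⟩
    have hPQ0 : s^(2*((i:ℤ)-i')) - s^(-(2*((i:ℤ)-i'))) ≠ 0 := by
      intro h
      apply hP4
      have h' := sub_eq_zero.mp h
      calc s^(4*((i:ℤ)-i')) = s^(2*((i:ℤ)-i')) * s^(2*((i:ℤ)-i')) := by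
            rw [← zpow_add₀ hs0]; congr 1; ring
        _ = s^(2*((i:ℤ)-i')) * s^(-(2*((i:ℤ)-i'))) := by rw [← h']
        _ = 1 := by rw [← zpow_add₀ hs0]; simp
    have hε0 : s^((2*(i:ℤ)+2*(i':ℤ)-2)*(d:ℤ)) ≠ 0 := zpow_ne_zero _ hs0
    have hεeq : s^((2*(i:ℤ)+2*(i':ℤ)-2)*(d:ℤ)) = (-1:ℂ)^((i:ℤ)+i'-1) := by
      rw [show (2*(i:ℤ)+2*(i':ℤ)-2)*(d:ℤ) = (2*(d:ℤ))*((i:ℤ)+i'-1) by ring,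
        zpow_mul s (2*(d:ℤ)) ((i:ℤ)+i'-1), hs2d]
    have hPdeq : (s^(2*((i:ℤ)-i')))^d = (-1:ℂ)^((i:ℤ)-i') := by
      rw [← zpow_natCast (s^(2*((i:ℤ)-i'))) d, ← zpow_mul,
        show (2*((i:ℤ)-i'))*(d:ℤ) = (2*(d:ℤ))*((i:ℤ)-i') by ring,
        zpow_mul s (2*(d:ℤ)) ((i:ℤ)-i'), hs2d]
    have hQdeq : (s^(-(2*((i:ℤ)-i'))))^d = (-1:ℂ)^((i:ℤ)-i') := by
      rw [← zpow_natCast (s^(-(2*((i:ℤ)-i')))) d, ← zpow_mul,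
        show (-(2*((i:ℤ)-i')))*(d:ℤ) = (2*(d:ℤ))*(-((i:ℤ)-i')) by ring,
        zpow_mul s (2*(d:ℤ)) (-((i:ℤ)-i')), hs2d]
      rcases Int.even_or_odd ((i:ℤ)-i') with he | ho
      · rw [he.neg_one_zpow, (by rcases he with ⟨r, hr⟩; exact ⟨-r, by omega⟩ :
          Even (-((i:ℤ)-i'))).neg_one_zpow]
      · rw [ho.neg_one_zpow, (by rcases ho with ⟨r, hr⟩; exact ⟨-r-1, by omega⟩ :
          Odd (-((i:ℤ)-i'))).neg_one_zpow]
    have hsign : (-1:ℂ)^((i:ℤ)-i') = -(-1:ℂ)^((i:ℤ)+i'-1) := by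
      rcases Int.even_or_odd ((i:ℤ)-i') with he | ho
      · rw [he.neg_one_zpow, (by rcases he with ⟨r, hr⟩; exact ⟨(i':ℤ)+r-1, by omega⟩ :
          Odd ((i:ℤ)+i'-1)).neg_one_zpow]
        norm_num
      · rw [ho.neg_one_zpow, (by rcases ho with ⟨r, hr⟩; exact ⟨(i':ℤ)+r, by omega⟩ :
          Even ((i:ℤ)+i'-1)).neg_one_zpow]
    have hPd : (s^(2*((i:ℤ)-i')))^d = -(s^((2*(i:ℤ)+2*(i':ℤ)-2)*(d:ℤ))) := by
      rw [hPdeq, hεeq, hsign]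
    have hQd : (s^(-(2*((i:ℤ)-i'))))^d = -(s^((2*(i:ℤ)+2*(i':ℤ)-2)*(d:ℤ))) := by
      rw [hQdeq, hεeq, hsign]
    have hVd : ∀ j : ℕ, (s^((2*(i:ℤ)+2*(i':ℤ)-2) - 4*(j:ℤ)))^d
        = s^((2*(i:ℤ)+2*(i':ℤ)-2)*(d:ℤ)) := fun j => hconstd _ j
    have hVpow : ∀ k : ℕ, 0 < k → k < d →
        ∑ j ∈ range d, (s^((2*(i:ℤ)+2*(i':ℤ)-2) - 4*(j:ℤ)))^k = 0 := by
      intro k h1 h2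
      refine hzero _ k (hdvd2 (k:ℤ) (by omega) (by omega) (by omega) (by omega))
    have hstep : ∀ j ∈ range d,
        2*(s^(2*(i:ℤ)-2*(j:ℤ)-1))*I
          /((d:ℂ)*((s^(2*(i:ℤ)-2*(j:ℤ)-1))*(s^(2*(i:ℤ)-2*(j:ℤ)-1))-1))
        * (2*(s^(2*(i':ℤ)-2*(j:ℤ)-1))*I
          /((d:ℂ)*((s^(2*(i':ℤ)-2*(j:ℤ)-1))*(s^(2*(i':ℤ)-2*(j:ℤ)-1))-1)))
        = (-4/((d:ℂ)^2*(s^(2*((i:ℤ)-i')) - s^(-(2*((i:ℤ)-i'))))))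
            * ((s^(2*((i:ℤ)-i'))) * (1/(s^((2*(i:ℤ)+2*(i':ℤ)-2) - 4*(j:ℤ)) - s^(2*((i:ℤ)-i')))))
          - (-4/((d:ℂ)^2*(s^(2*((i:ℤ)-i')) - s^(-(2*((i:ℤ)-i'))))))
            * ((s^(-(2*((i:ℤ)-i')))) * (1/(s^((2*(i:ℤ)+2*(i':ℤ)-2) - 4*(j:ℤ)) - s^(-(2*((i:ℤ)-i')))))) := by
      intro j _
      have hxyP : s^(2*(i:ℤ)-2*j-1) * (s^(2*(i':ℤ)-2*j-1))⁻¹ = s^(2*((i:ℤ)-i')) := by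
        rw [← zpow_neg, ← zpow_add₀ hs0]; congr 1; ring
      have hxyQ : (s^(2*(i:ℤ)-2*j-1))⁻¹ * s^(2*(i':ℤ)-2*j-1) = s^(-(2*((i:ℤ)-i'))) := by
        rw [← zpow_neg, ← zpow_add₀ hs0]; congr 1; ring
      have hxyV : s^(2*(i:ℤ)-2*j-1) * s^(2*(i':ℤ)-2*j-1)
          = s^((2*(i:ℤ)+2*(i':ℤ)-2) - 4*(j:ℤ)) := by
        rw [← zpow_add₀ hs0]; congr 1; ring
      have hPQ' : s^(2*(i:ℤ)-2*j-1) * (s^(2*(i':ℤ)-2*j-1))⁻¹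
          - (s^(2*(i:ℤ)-2*j-1))⁻¹ * s^(2*(i':ℤ)-2*j-1) ≠ 0 := by
        rw [hxyP, hxyQ]; exact hPQ0
      rw [offdiag_term (d:ℂ) _ _ hdC (hxne i j) (hxne i' j) (hxxne i j) (hxxne i' j) hPQ']
      rw [hxyP, hxyQ, hxyV]
    rw [Finset.sum_congr rfl hstep, Finset.sum_sub_distrib]
    simp only [← Finset.mul_sum]
    rw [show (s ^ (2 * ((i:ℤ) - ↑i')) *
          ∑ j ∈ range d, 1 / (s ^ (2 * (i:ℤ) + 2 * (i':ℤ) - 2 - 4 * (j:ℤ)) - s ^ (2 * ((i:ℤ) - ↑i')))) = -(d:ℂ)/2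
        from half_sum d hd _ _ (fun j => s^((2*(i:ℤ)+2*(i':ℤ)-2) - 4*(j:ℤ))) hε0 hVd hPd hVpow,
      show (s ^ (-(2 * ((i:ℤ) - ↑i'))) *
          ∑ j ∈ range d, 1 / (s ^ (2 * (i:ℤ) + 2 * (i':ℤ) - 2 - 4 * (j:ℤ)) - s ^ (-(2 * ((i:ℤ) - ↑i'))))) = -(d:ℂ)/2
        from half_sum d hd _ _ (fun j => s^((2*(i:ℤ)+2*(i':ℤ)-2) - 4*(j:ℤ))) hε0 hVd hQd hVpow,
      sub_self]

/-- The `d × d` matrix `W` with entries `W i j = 1 / (d sin((i−j−1/2)π/d))`,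
viewed as a complex matrix, is unitary. -/
theorem W_unitary (d : ℕ) (hd : 2 ≤ d)
    (W : Matrix (Fin d) (Fin d) ℂ)
    (hW : ∀ i j : Fin d,
      W i j = ((1 / (d * Real.sin (((i : ℝ) - (j : ℝ) - 1 / 2) * Real.pi / d)) : ℝ) : ℂ)) :
    W ∈ Matrix.unitaryGroup (Fin d) ℂ := by
  rw [Matrix.mem_unitaryGroup_iff]
  ext i i'
  rw [Matrix.mul_apply, Matrix.one_apply]
  have hterm : ∀ j : Fin d, W i j * (star W) j i'
      = (((1 / (d * Real.sin ((((i:ℕ) : ℝ) - ((j:ℕ) : ℝ) - 1 / 2) * Real.pi / d)) : ℝ) : ℂ) *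
         ((1 / (d * Real.sin ((((i':ℕ) : ℝ) - ((j:ℕ) : ℝ) - 1 / 2) * Real.pi / d)) : ℝ) : ℂ)) := by
    intro j
    rw [Matrix.star_apply, hW i j, hW i' j, Complex.star_def, Complex.conj_ofReal]
  rw [Finset.sum_congr rfl (fun j _ => hterm j)]
  rw [Fin.sum_univ_eq_sum_range (fun j =>
      (((1 / (d * Real.sin ((((i:ℕ) : ℝ) - ((j:ℕ) : ℝ) - 1 / 2) * Real.pi / d)) : ℝ) : ℂ) *
       ((1 / (d * Real.sin ((((i':ℕ) : ℝ) - ((j:ℕ) : ℝ) - 1 / 2) * Real.pi / d)) : ℝ) : ℂ))) d]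
  rw [key d hd i i' i.isLt i'.isLt]
  by_cases h : i = i'
  · rw [if_pos h, if_pos (congrArg Fin.val h)]
  · rw [if_neg (fun hh => h (Fin.val_injective hh)), if_neg h]
end

section
/- Let ρ be a state on H_A ⊗ H_B and {M^A_{a|x}}, {M^B_{b|y}} measurement operators such that the correlation P(a,b|x,y) = tr(ρ · M^A_{a|x} ⊗ M^B_{b|y}) is symmetric, i.e., P(a,b|x,y) = P(b,a|y,x) for all a,b,x,y. Define the symmetrized state ρ' = (1/2)[ρ ⊗ |01⟩⟨01| + (SρS†) ⊗ |10⟩⟨10|] on (H ⊗ ℂ²) ⊗ (H ⊗ ℂ²) (with appropriate reordering of factors) and symmetrized measurements N_{a|x} = M^A_{a|x} ⊗ |0⟩⟨0| + M^B_{a|x} ⊗ |1⟩⟨1|. Then tr(ρ' · N_{a|x} ⊗ N_{b|y}) = P(a,b|x,y) for all a,b,x,y. -/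
open Matrix Kronecker

/-!
The symmetrized measurement `N_{a|x}` is block diagonal with respect to the ancilla, so on the
branch `|kl⟩⟨kl|` of `ρ'` the ancillas select which of `M^A`, `M^B` acts on each side. The `|01⟩`
branch reproduces `P(a,b|x,y)`; on the `|10⟩` branch the swap `S` exchanges the two parties and
turns `tr(SρS† (M^B_{a|x} ⊗ M^A_{b|y}))` into `P(b,a|y,x)`. Symmetry of `P` makes the average of
the two branches equal to `P(a,b|x,y)`.
-/

namespace Matrix

variable {m n ι R : Type*}

theorem trace_submatrix_equiv [Fintype m] [Fintype n] [AddCommMonoid R]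
    (A : Matrix m m R) (e : n ≃ m) : trace (A.submatrix e e) = trace A :=
  e.sum_comp A.diag

theorem sum_kronecker_single_eq_blockDiagonal [Fintype ι] [DecidableEq ι] [Semiring R]
    (M : ι → Matrix m n R) : ∑ i, M i ⊗ₖ single i i (1 : R) = blockDiagonal M := by
  ext ⟨a, k⟩ ⟨b, l⟩
  simp [sum_apply, blockDiagonal_apply', single_apply, ite_and]

theorem blockDiagonal_kronecker_blockDiagonal [DecidableEq ι] [MulZeroClass R]
    {m' n' ι' : Type*} [DecidableEq ι'] (M : ι → Matrix m n R) (N : ι' → Matrix m' n' R) :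
    blockDiagonal M ⊗ₖ blockDiagonal N =
      reindex (Equiv.prodProdProdComm m ι m' ι').symm (Equiv.prodProdProdComm n ι n' ι').symm
        (blockDiagonal fun p => M p.1 ⊗ₖ N p.2) := by
  ext ⟨⟨a, k⟩, b, l⟩ ⟨⟨c, k'⟩, d, l'⟩
  simp only [kroneckerMap_apply, blockDiagonal_apply', reindex_apply, submatrix_apply,
    Equiv.symm_symm, Equiv.prodProdProdComm_apply, Prod.mk.injEq]
  split_ifs <;> simp_all

theorem trace_kronecker_single_mul_blockDiagonal [Fintype m] [Fintype ι] [DecidableEq ι]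
    [Semiring R] (σ : Matrix m m R) (B : ι → Matrix m m R) (i : ι) :
    trace ((σ ⊗ₖ single i i (1 : R)) * blockDiagonal B) = trace (σ * B i) := by
  simp [trace, mul_apply, Fintype.sum_prod_type, blockDiagonal_apply', single_apply, ite_and]

theorem trace_submatrix_swap_mul_kronecker [Fintype m] [Fintype n] [CommSemiring R]
    (ρ : Matrix (m × n) (m × n) R) (X : Matrix n n R) (Y : Matrix m m R) :
    trace (ρ.submatrix Prod.swap Prod.swap * (X ⊗ₖ Y)) = trace (ρ * (Y ⊗ₖ X)) := by
  have hXY : X ⊗ₖ Y = (Y ⊗ₖ X).submatrix (Equiv.prodComm n m) (Equiv.prodComm n m) := by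
    ext ⟨a, b⟩ ⟨c, d⟩
    simp [mul_comm]
  rw [hXY]
  exact (congrArg trace (submatrix_mul_equiv ρ _ _ (Equiv.prodComm n m) _)).trans
    (trace_submatrix_equiv _ _)

theorem swap_mul_mul_conjTranspose [Fintype n] [DecidableEq n] [Semiring R] [StarRing R]
    {S : Matrix (n × n) (n × n) R}
    (hS : ∀ p q : n × n, S p q = if p.1 = q.2 ∧ p.2 = q.1 then 1 else 0)
    (ρ : Matrix (n × n) (n × n) R) : S * ρ * Sᴴ = ρ.submatrix Prod.swap Prod.swap := by
  ext p q
  simp [mul_apply, hS, conjTranspose_apply, Fintype.sum_prod_type, ite_and, apply_ite star,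
    Prod.swap]

end Matrix

/-- Symmetrization of Moroder et al.: if a (possibly asymmetric) strategy
`(ρ, {M^A_{a|x}}, {M^B_{b|y}})` produces a symmetric correlation `P`, then the
symmetrized state `ρ' = ½[ρ ⊗ |01⟩⟨01| + SρS† ⊗ |10⟩⟨10|]` together with the
symmetrized measurements `N_{a|x} = M^A_{a|x} ⊗ |0⟩⟨0| + M^B_{a|x} ⊗ |1⟩⟨1|`
reproduces the same correlation. -/
theorem symmetrization_preserves_correlation
    {D : ℕ} {A X : Type*}
    (S : Matrix (Fin D × Fin D) (Fin D × Fin D) ℂ)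
    (hS : ∀ p q : Fin D × Fin D, S p q = if p.1 = q.2 ∧ p.2 = q.1 then 1 else 0)
    (ρ : Matrix (Fin D × Fin D) (Fin D × Fin D) ℂ)
    (MA MB : A → X → Matrix (Fin D) (Fin D) ℂ)
    (P : A → A → X → X → ℂ)
    (hP : ∀ a b x y, P a b x y = (ρ * (MA a x ⊗ₖ MB b y)).trace)
    (hPsym : ∀ a b x y, P a b x y = P b a y x)
    -- reordering of tensor factors: Alice holds `Fin D × Fin 2`, Bob holds `Fin D × Fin 2`
    (e : (Fin D × Fin 2) × (Fin D × Fin 2) ≃ (Fin D × Fin D) × (Fin 2 × Fin 2))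
    (he : e = Equiv.prodProdProdComm (Fin D) (Fin 2) (Fin D) (Fin 2))
    (ρ' : Matrix ((Fin D × Fin 2) × (Fin D × Fin 2)) ((Fin D × Fin 2) × (Fin D × Fin 2)) ℂ)
    (hρ' : ρ' = Matrix.reindex e.symm e.symm
      ((1 / 2 : ℂ) •
        (ρ ⊗ₖ (Matrix.single (0 : Fin 2) 0 (1 : ℂ) ⊗ₖ Matrix.single (1 : Fin 2) 1 (1 : ℂ)) +
         (S * ρ * Sᴴ) ⊗ₖ (Matrix.single (1 : Fin 2) 1 (1 : ℂ) ⊗ₖ Matrix.single (0 : Fin 2) 0 (1 : ℂ)))))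
    (N : A → X → Matrix (Fin D × Fin 2) (Fin D × Fin 2) ℂ)
    (hN : ∀ a x, N a x = MA a x ⊗ₖ Matrix.single (0 : Fin 2) 0 (1 : ℂ)
      + MB a x ⊗ₖ Matrix.single (1 : Fin 2) 1 (1 : ℂ)) :
    ∀ a b x y, (ρ' * (N a x ⊗ₖ N b y)).trace = P a b x y := by
  intro a b x y
  have hN' : ∀ a x, N a x = blockDiagonal ![MA a x, MB a x] := fun a x => by
    rw [hN, ← sum_kronecker_single_eq_blockDiagonal, Fin.sum_univ_two]
    rfl
  have hsplit : (ρ' * (N a x ⊗ₖ N b y)).trace = (1 / 2) * ((ρ * (MA a x ⊗ₖ MB b y)).trace +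
      (ρ.submatrix Prod.swap Prod.swap * (MB a x ⊗ₖ MA b y)).trace) := by
    rw [hρ', he, hN', hN', blockDiagonal_kronecker_blockDiagonal, reindex_apply, reindex_apply,
      submatrix_mul_equiv, trace_submatrix_equiv, single_kronecker_single,
      single_kronecker_single, mul_one, swap_mul_mul_conjTranspose hS, smul_mul, add_mul,
      trace_smul, trace_add, trace_kronecker_single_mul_blockDiagonal,
      trace_kronecker_single_mul_blockDiagonal, smul_eq_mul]
    rfl
  rw [hsplit, trace_submatrix_swap_mul_kronecker, ← hP, ← hP, ← hPsym]
  ring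
end

section
/- Let |ψ⟩ be a bipartite pure state, {M^A_{a|x}}, {M^B_{b|y}} POVMs satisfying M^B_{a|k} = (M^A_{a|k})* for all a, k, such that the correlation P(a,b|x,y) = ⟨ψ| M^A_{a|x} ⊗ M^B_{b|y} |ψ⟩ is symmetric (P(a,b|x,y) = P(b,a|y,x)), and suppose the operators {M^A_{a|x}}_{a,x} span the full space of operators on the local Hilbert space. Then S|ψ⟩ = e^{iθ}|ψ*⟩ for some phase θ ∈ [0, 2π), where S is the swap operator and * is complex conjugation. -/
open Matrix Kronecker ComplexOrder

/-!
For hermitian `M` one has `M* = Mᵀ`, so the correlation is real and the symmetry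
`P(a,b|x,y) = P(b,a|y,x)` says that the rank-one operators `|ψ*⟩⟨ψ*|` and `S|ψ⟩⟨ψ|S` have the
same trace against every product `(M^A_{a|x})ᵀ ⊗ M^A_{b|y}`. Such products span all operators on
the bipartite space, so the two rank-one operators are equal, and two vectors with the same
rank-one operator differ by a phase.
-/

namespace Matrix

variable {R : Type*} {m n : Type*}

theorem IsHermitian.map_starRingEnd_eq_transpose [CommSemiring R] [StarRing R]
    {M : Matrix n n R} (hM : M.IsHermitian) : M.map (starRingEnd R) = Mᵀ := by
  ext i j
  exact hM.apply j i

theorem span_range_transpose_eq_top [CommSemiring R] {ι : Type*} {f : ι → Matrix m n R}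
    (hf : Submodule.span R (Set.range f) = ⊤) :
    Submodule.span R (Set.range fun i => (f i)ᵀ) = ⊤ := by
  rw [Set.range_comp' transpose f]
  change Submodule.span R ((transposeLinearEquiv m n R R).toLinearMap '' _) = ⊤
  rw [Submodule.span_image, hf, Submodule.map_top, LinearEquiv.range]

variable [Fintype m] [Fintype n]

theorem trace_mul_vecMulVec_star [CommSemiring R] [Star R] (H : Matrix n n R) (u : n → R) :
    trace (H * vecMulVec u (star u)) = star u ⬝ᵥ (H *ᵥ u) := by
  rw [mul_vecMulVec, trace_vecMulVec, dotProduct_comm]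

theorem star_star_dotProduct_mulVec_star [CommSemiring R] [StarRing R] (H : Matrix n n R)
    (u : n → R) :
    star (star u) ⬝ᵥ (H *ᵥ star u) = star (star u ⬝ᵥ (H.map star *ᵥ u)) := by
  simp [dotProduct, mulVec, star_sum, mul_comm]

theorem star_comp_swap_dotProduct_kronecker_mulVec_comp_swap [CommSemiring R] [Star R]
    (A : Matrix m m R) (B : Matrix n n R) (u : n × m → R) :
    star (u ∘ Prod.swap) ⬝ᵥ ((A ⊗ₖ B) *ᵥ (u ∘ Prod.swap)) = star u ⬝ᵥ ((B ⊗ₖ A) *ᵥ u) := by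
  have hAB : A ⊗ₖ B = (B ⊗ₖ A).submatrix (Equiv.prodComm m n) (Equiv.prodComm m n) := by
    ext ⟨i, j⟩ ⟨k, l⟩
    simp [mul_comm]
  rw [hAB, submatrix_mulVec_equiv, Equiv.prodComm_symm, Equiv.coe_prodComm, Function.comp_assoc,
    Prod.swap_swap_eq, Function.comp_id]
  exact comp_equiv_dotProduct_comp_equiv (star u) _ (Equiv.prodComm m n)

theorem IsHermitian.star_star_dotProduct_transpose_kronecker_mulVec_star
    {M : Matrix m m ℂ} {N : Matrix n n ℂ} (hM : M.IsHermitian) (hN : N.IsHermitian)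
    (ψ : m × n → ℂ) :
    star (star ψ) ⬝ᵥ ((Mᵀ ⊗ₖ N) *ᵥ star ψ) = star ψ ⬝ᵥ ((M ⊗ₖ Nᵀ) *ᵥ ψ) := by
  have hconj : (Mᵀ ⊗ₖ N).map star = M ⊗ₖ Nᵀ := by
    ext ⟨i, j⟩ ⟨k, l⟩
    simp only [map_apply, kronecker_apply, transpose_apply, star_mul', hM.apply, hN.apply]
  have hMN : (M ⊗ₖ Nᵀ).IsHermitian := by
    rw [IsHermitian, conjTranspose_kronecker, hM.eq, hN.transpose.eq]
  rw [star_star_dotProduct_mulVec_star, hconj]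
  exact RCLike.conj_eq_iff_im.mpr (hMN.im_star_dotProduct_mulVec_self ψ)

theorem eq_of_trace_kronecker_mul_eq [CommSemiring R] [DecidableEq m] [DecidableEq n]
    {S : Set (Matrix m m R)} {T : Set (Matrix n n R)}
    (hS : Submodule.span R S = ⊤) (hT : Submodule.span R T = ⊤)
    {D D' : Matrix (m × n) (m × n) R}
    (h : ∀ M ∈ S, ∀ N ∈ T, trace ((M ⊗ₖ N) * D) = trace ((M ⊗ₖ N) * D')) : D = D' := by
  let B (D : Matrix (m × n) (m × n) R) : Matrix m m R →ₗ[R] Matrix n n R →ₗ[R] R :=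
    kroneckerBilinear.compr₂ (traceLinearMap _ R R ∘ₗ LinearMap.mulRight R D)
  have hB : B D = B D' :=
    LinearMap.ext_on hS fun M hM => LinearMap.ext_on hT fun N hN => h M hM N hN
  ext ⟨i, j⟩ ⟨k, l⟩
  simpa [B, kroneckerBilinear, single_kronecker_single, trace_single_mul] using
    LinearMap.congr_fun₂ hB (single k i 1) (single l j 1)

end Matrix

theorem exists_norm_eq_one_smul_eq_of_vecMulVec_eq {ι : Type*} {v w : ι → ℂ}
    (h : vecMulVec v (star v) = vecMulVec w (star w)) : ∃ c : ℂ, ‖c‖ = 1 ∧ w = c • v := by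
  have hvw (p q : ι) : v p * star (v q) = w p * star (w q) := congr_fun₂ h p q
  by_cases hv : v = 0
  · refine ⟨1, norm_one, funext fun p => ?_⟩
    simpa [hv] using hvw p p
  obtain ⟨p, hp⟩ := Function.ne_iff.mp hv
  have hwp : w p ≠ 0 := fun hwp => hp (by simpa [hwp] using hvw p p)
  refine ⟨w p / v p, ?_, funext fun q => ?_⟩
  · have hnorm : ‖v p‖ * ‖v p‖ = ‖w p‖ * ‖w p‖ := by
      simpa using congrArg norm (hvw p p)
    rw [norm_div, div_eq_one_iff_eq (norm_ne_zero_iff.mpr hp)]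
    nlinarith [norm_nonneg (v p), norm_nonneg (w p)]
  · rw [Pi.smul_apply, smul_eq_mul, div_mul_eq_mul_div, eq_div_iff hp]
    refine mul_left_cancel₀ (star_ne_zero.mpr hwp) ?_
    linear_combination v q * hvw p p - v p * hvw q p

theorem Complex.exists_mem_Ico_exp_mul_I_eq {c : ℂ} (hc : ‖c‖ = 1) :
    ∃ θ ∈ Set.Ico 0 (2 * Real.pi), exp (θ * I) = c := by
  refine ⟨toIcoMod Real.two_pi_pos 0 (arg c),
    by simpa using toIcoMod_mem_Ico Real.two_pi_pos 0 (arg c), ?_⟩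
  rw [← self_sub_toIcoDiv_zsmul]
  push_cast
  exact (exp_mul_I_periodic.sub_zsmul_eq _).trans (by simpa [hc] using norm_mul_exp_arg_mul_I c)

theorem symmetric_correlation_forces_swap_conj_general
    {d : ℕ} {A X : Type*} [Fintype A] [Fintype X]
    (ψ : (Fin d × Fin d) → ℂ)
    (MA MB : A → X → Matrix (Fin d) (Fin d) ℂ)
    (hpos : ∀ a x, (MA a x).PosSemidef)
    (hconj : ∀ a x, MB a x = (MA a x).map (starRingEnd ℂ))
    (hspan : Submodule.span ℂ (Set.range fun p : A × X => MA p.1 p.2) = ⊤)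
    (hsym : ∀ (a b : A) (x y : X),
      star ψ ⬝ᵥ ((MA a x ⊗ₖ MB b y) *ᵥ ψ) = star ψ ⬝ᵥ ((MA b y ⊗ₖ MB a x) *ᵥ ψ)) :
    ∃ θ : ℝ, θ ∈ Set.Ico 0 (2 * Real.pi) ∧
      ∀ i j : Fin d, ψ (j, i) = Complex.exp ((θ : ℂ) * Complex.I) * star (ψ (i, j)) := by
  have hMB (a : A) (x : X) : MB a x = (MA a x)ᵀ :=
    (hconj a x).trans (hpos a x).isHermitian.map_starRingEnd_eq_transpose
  have hgen : ∀ M ∈ Set.range fun p : A × X => (MA p.1 p.2)ᵀ,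
      ∀ N ∈ Set.range fun p : A × X => MA p.1 p.2,
      trace ((M ⊗ₖ N) * vecMulVec (star ψ) (star (star ψ))) =
        trace ((M ⊗ₖ N) * vecMulVec (ψ ∘ Prod.swap) (star (ψ ∘ Prod.swap))) := by
    rintro _ ⟨⟨a, x⟩, rfl⟩ _ ⟨⟨b, y⟩, rfl⟩
    dsimp only
    rw [trace_mul_vecMulVec_star, trace_mul_vecMulVec_star,
      star_comp_swap_dotProduct_kronecker_mulVec_comp_swap,
      (hpos a x).isHermitian.star_star_dotProduct_transpose_kronecker_mulVec_star
        (hpos b y).isHermitian, ← hMB, ← hMB]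
    exact hsym a b x y
  obtain ⟨c, hc, hψc⟩ := exists_norm_eq_one_smul_eq_of_vecMulVec_eq
    (eq_of_trace_kronecker_mul_eq (span_range_transpose_eq_top hspan) hspan hgen)
  obtain ⟨θ, hθ, rfl⟩ := Complex.exists_mem_Ico_exp_mul_I_eq hc
  exact ⟨θ, hθ, fun i j => congr_fun hψc (i, j)⟩

/-- If a pure state `|ψ⟩` measured with POVMs satisfying `M^B_{a|k} = (M^A_{a|k})*`
yields a symmetric correlation, and the operators `{M^A_{a|x}}` span the full local
operator space, then `S|ψ⟩ = e^{iθ}|ψ*⟩` for some phase `θ ∈ [0, 2π)`. -/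
theorem symmetric_correlation_forces_swap_conj
    {d : ℕ} {A X : Type*} [Fintype A] [Fintype X]
    (ψ : (Fin d × Fin d) → ℂ)
    (hψ : star ψ ⬝ᵥ ψ = 1)
    (MA MB : A → X → Matrix (Fin d) (Fin d) ℂ)
    (hpos : ∀ a x, (MA a x).PosSemidef)
    (hsum : ∀ x, ∑ a, MA a x = 1)
    (hconj : ∀ a x, MB a x = (MA a x).map (starRingEnd ℂ))
    (hspan : Submodule.span ℂ (Set.range fun p : A × X => MA p.1 p.2) = ⊤)
    (hsym : ∀ (a b : A) (x y : X),
      star ψ ⬝ᵥ ((MA a x ⊗ₖ MB b y) *ᵥ ψ) = star ψ ⬝ᵥ ((MA b y ⊗ₖ MB a x) *ᵥ ψ)) :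
    ∃ θ : ℝ, θ ∈ Set.Ico 0 (2 * Real.pi) ∧
      ∀ i j : Fin d, ψ (j, i) = Complex.exp ((θ : ℂ) * Complex.I) * star (ψ (i, j)) :=
  symmetric_correlation_forces_swap_conj_general ψ MA MB hpos hconj hspan hsym
end

section
/- Let {a_k}_{k=1}^m ⊂ ℝ³ with m ≥ 3 be non-coplanar and b_k = M a_k where M = diag(1,−1,1). Then there do not exist unitaries U_A, U_B ∈ SU(2) such that U_A(a_k·σ)U_A† = U_B(b_k·σ)U_B† for all k. In other words, mirror-symmetric non-coplanar qubit measurement pairs cannot be made identical by local unitaries. -/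
open Matrix

noncomputable def σx : Matrix (Fin 2) (Fin 2) ℂ := !![0, 1; 1, 0]
noncomputable def σy : Matrix (Fin 2) (Fin 2) ℂ := !![0, -Complex.I; Complex.I, 0]
noncomputable def σz : Matrix (Fin 2) (Fin 2) ℂ := !![1, 0; 0, -1]

noncomputable def dotSigma (v : Fin 3 → ℝ) : Matrix (Fin 2) (Fin 2) ℂ :=
  (v 0 : ℂ) • σx + (v 1 : ℂ) • σy + (v 2 : ℂ) • σz

/-- The mirror reflection `M = diag(1, −1, 1)` acting on `ℝ³`. -/
def mirror (v : Fin 3 → ℝ) : Fin 3 → ℝ := ![v 0, -v 1, v 2]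

/-!
The triple product `tr((u·σ)(v·σ)(w·σ)) = 2i det(u, v, w)` is invariant under unitary conjugation,
while the mirror `diag(1, −1, 1)` flips the sign of the determinant. Equal local conjugates would
therefore force every determinant of three of the `a_k` to vanish, which is impossible when the
`a_k` span `ℝ³`.
-/

theorem Matrix.trace_conj_mul_conj_mul_conj {n R : Type*} [Fintype n] [DecidableEq n]
    [CommRing R] [StarRing R] {U : Matrix n n R} (hU : U ∈ unitaryGroup n R)
    (X Y Z : Matrix n n R) :
    trace (U * X * Uᴴ * (U * Y * Uᴴ) * (U * Z * Uᴴ)) = trace (X * Y * Z) := by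
  have hUU : Uᴴ * U = 1 := mem_unitaryGroup_iff'.mp hU
  have hprod : U * X * Uᴴ * (U * Y * Uᴴ) * (U * Z * Uᴴ) = U * (X * Y * Z) * Uᴴ := by
    simp only [Matrix.mul_assoc, ← Matrix.mul_assoc Uᴴ U, hUU, Matrix.one_mul]
  rw [hprod, trace_mul_cycle, ← Matrix.mul_assoc, hUU, Matrix.one_mul]

theorem exists_det_ne_zero_of_span_eq_top {ι K : Type*} [Field K] {n : ℕ} (a : ι → Fin n → K)
    (hspan : Submodule.span K (Set.range a) = ⊤) :
    ∃ f : Fin n → ι, (of (a ∘ f)).det ≠ 0 := by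
  obtain ⟨κ, g, -, hspan_g, hli⟩ := exists_linearIndependent' K a
  let basis : Module.Basis κ K (Fin n → K) :=
    .mk hli (by rw [hspan_g, hspan])
  let e : κ ≃ Fin n := basis.indexEquiv (Pi.basisFun K (Fin n))
  refine ⟨g ∘ e.symm, fun hdet => ?_⟩
  have hunit : IsUnit (of (a ∘ g ∘ e.symm)) :=
    linearIndependent_rows_iff_isUnit.mp (hli.comp e.symm e.symm.injective)
  exact ((isUnit_iff_isUnit_det _).mp hunit).ne_zero hdet

theorem trace_dotSigma_mul_dotSigma_mul_dotSigma (v : Fin 3 → Fin 3 → ℝ) :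
    trace (dotSigma (v 0) * dotSigma (v 1) * dotSigma (v 2)) = 2 * Complex.I * (of v).det := by
  simp only [dotSigma, σx, σy, σz, trace_fin_two, det_fin_three, of_apply]
  simp [Matrix.mul_apply, Fin.sum_univ_two]
  ring

theorem det_of_mirror_comp (v : Fin 3 → Fin 3 → ℝ) : (of (mirror ∘ v)).det = -(of v).det := by
  simp only [det_fin_three, of_apply, Function.comp, mirror]
  simp only [cons_val_zero, cons_val_one, cons_val, mul_neg, neg_mul, sub_neg_eq_add, neg_sub]
  ring

theorem det_of_comp_eq_of_conj_dotSigma_eq {ι : Type*} {a b : ι → Fin 3 → ℝ}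
    {UA UB : Matrix (Fin 2) (Fin 2) ℂ} (hUA : UA ∈ unitaryGroup (Fin 2) ℂ)
    (hUB : UB ∈ unitaryGroup (Fin 2) ℂ)
    (hconj : ∀ k, UA * dotSigma (a k) * UAᴴ = UB * dotSigma (b k) * UBᴴ) (f : Fin 3 → ι) :
    (of (a ∘ f)).det = (of (b ∘ f)).det := by
  have htrace : 2 * Complex.I * (of (a ∘ f)).det = 2 * Complex.I * (of (b ∘ f)).det :=
    calc 2 * Complex.I * (of (a ∘ f)).det
        = trace (dotSigma (a (f 0)) * dotSigma (a (f 1)) * dotSigma (a (f 2))) :=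
          (trace_dotSigma_mul_dotSigma_mul_dotSigma (a ∘ f)).symm
      _ = trace (UA * dotSigma (a (f 0)) * UAᴴ * (UA * dotSigma (a (f 1)) * UAᴴ) *
            (UA * dotSigma (a (f 2)) * UAᴴ)) := (trace_conj_mul_conj_mul_conj hUA _ _ _).symm
      _ = trace (UB * dotSigma (b (f 0)) * UBᴴ * (UB * dotSigma (b (f 1)) * UBᴴ) *
            (UB * dotSigma (b (f 2)) * UBᴴ)) := by rw [hconj, hconj, hconj]
      _ = trace (dotSigma (b (f 0)) * dotSigma (b (f 1)) * dotSigma (b (f 2))) :=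
          trace_conj_mul_conj_mul_conj hUB _ _ _
      _ = 2 * Complex.I * (of (b ∘ f)).det := trace_dotSigma_mul_dotSigma_mul_dotSigma (b ∘ f)
  exact_mod_cast mul_left_cancel₀ (by simp) htrace

theorem no_local_unitaries_symmetrize_mirror_general {m : ℕ}
    (a : Fin m → (Fin 3 → ℝ))
    (hspan : Submodule.span ℝ (Set.range a) = ⊤)
    (b : Fin m → (Fin 3 → ℝ)) (hb : ∀ k, b k = mirror (a k)) :
    ¬ ∃ UA UB : Matrix (Fin 2) (Fin 2) ℂ,
        UA ∈ Matrix.unitaryGroup (Fin 2) ℂ ∧ UA.det = 1 ∧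
        UB ∈ Matrix.unitaryGroup (Fin 2) ℂ ∧ UB.det = 1 ∧
        ∀ k, UA * dotSigma (a k) * UAᴴ = UB * dotSigma (b k) * UBᴴ := by
  rintro ⟨UA, UB, hUA, -, hUB, -, hconj⟩
  obtain ⟨f, hf⟩ := exists_det_ne_zero_of_span_eq_top a hspan
  have hb_comp : b ∘ f = mirror ∘ a ∘ f := funext fun i => hb (f i)
  have hdet : (of (a ∘ f)).det = -(of (a ∘ f)).det :=
    calc (of (a ∘ f)).det = (of (b ∘ f)).det :=
          det_of_comp_eq_of_conj_dotSigma_eq hUA hUB hconj f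
      _ = -(of (a ∘ f)).det := by rw [hb_comp, det_of_mirror_comp]
  exact hf (by linarith)

/-- Mirror-symmetric non-coplanar qubit measurements cannot be made identical by
local unitaries: if `{a_k}` (`m ≥ 3`) span `ℝ³` and `b_k = diag(1,−1,1) a_k`,
then there are no `U_A, U_B ∈ SU(2)` with `U_A (a_k·σ) U_A† = U_B (b_k·σ) U_B†`. -/
theorem no_local_unitaries_symmetrize_mirror {m : ℕ} (hm : 3 ≤ m)
    (a : Fin m → (Fin 3 → ℝ))
    (hspan : Submodule.span ℝ (Set.range a) = ⊤)
    (b : Fin m → (Fin 3 → ℝ)) (hb : ∀ k, b k = mirror (a k)) :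
    ¬ ∃ UA UB : Matrix (Fin 2) (Fin 2) ℂ,
        UA ∈ Matrix.unitaryGroup (Fin 2) ℂ ∧ UA.det = 1 ∧
        UB ∈ Matrix.unitaryGroup (Fin 2) ℂ ∧ UB.det = 1 ∧
        ∀ k, UA * dotSigma (a k) * UAᴴ = UB * dotSigma (b k) * UBᴴ :=
  no_local_unitaries_symmetrize_mirror_general a hspan b hb
end
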